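/- arXiv:1912.13322 — 2 statements merged into one kernel-verified Lean document; each statement's English description precedes it below -/
import Mathlib

section
/- Let 𝔫 be the 5-dimensional real Lie algebra with orthonormal basis {E₁,…,E₅} and non-zero brackets [E₁,E₂] = s·E₅ and [E₃,E₄] = m·E₅, where s ≥ m > 0 (the two-step nilpotent Lie algebra with one-dimensional center). Then there exist c ∈ ℝ and a derivation D of 𝔫 with Ric = c·Id + D if and only if s = m; moreover, in that case necessarily c = −2m². -/
/-!
The Ricci operator of this bracket is diagonal in the basis `E`, with entries
`-s²/2, -s²/2, -m²/2, -m²/2, (s² + m²)/2`. Evaluating the derivation identity on `[E₁,E₂]` and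
`[E₃,E₄]` shows that the diagonal entries `dᵢ` of any derivation satisfy `d₅ = d₁ + d₂ = d₃ + d₄`.
For `D = Ric - c·Id` this forces `s² = m²` and `c = -(3s² + m²)/2`; conversely, for `s = m`,
`Ric + 2m²·Id` is diagonal with entries `3m²/2, 3m²/2, 3m²/2, 3m²/2, 3m²`, a derivation.
-/

open scoped BigOperators

namespace Nilsoliton0

noncomputable section

abbrev V : Type := Fin 5 → ℝ

/-- The orthonormal basis vectors E₁,…,E₅ (indexed 0,…,4). -/
def E (i : Fin 5) : V := Pi.single i 1

/-- The inner product making `E` an orthonormal basis. -/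
def ip (x y : V) : ℝ := ∑ i, x i * y i

/-- `D` is a derivation of the bracket `br`. -/
def IsDerivation (br : V → V → V) (D : V →ₗ[ℝ] V) : Prop :=
  ∀ X Y : V, D (br X Y) = br (D X) Y + br X (D Y)

/-- `Ric` is the Ricci operator of the nilpotent Lie group with left-invariant
metric determined by the bracket `br` and the orthonormal basis `E`. -/
def IsRicci (br : V → V → V) (Ric : V →ₗ[ℝ] V) : Prop :=
  ∀ X Y : V, ip (Ric X) Y =
      -(1/2) * (∑ i : Fin 5, ip (br X (E i)) (br Y (E i)))
      + (1/4) * (∑ i : Fin 5, ∑ j : Fin 5, ip (br (E i) (E j)) X * ip (br (E i) (E j)) Y)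

/-- The bracket: [E₁,E₂] = s·E₅, [E₃,E₄] = m·E₅. -/
def br (s m : ℝ) (X Y : V) : V :=
  (s * (X 0 * Y 1 - X 1 * Y 0) + m * (X 2 * Y 3 - X 3 * Y 2)) • E 4

variable {s m : ℝ}

lemma ip_E_right (v : V) (j : Fin 5) : ip v (E j) = v j := by
  simp [ip, E, Pi.single_apply]

lemma E_apply_self (j : Fin 5) : E j j = 1 := by
  simp [E]

def ricciDiag (s m : ℝ) : Fin 5 → ℝ :=
  ![-s ^ 2 / 2, -s ^ 2 / 2, -m ^ 2 / 2, -m ^ 2 / 2, (s ^ 2 + m ^ 2) / 2]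

lemma IsRicci.apply_eq {Ric : V →ₗ[ℝ] V} (hRic : IsRicci (br s m) Ric) (X : V) (j : Fin 5) :
    Ric X j = ricciDiag s m j * X j := by
  rw [← ip_E_right (Ric X) j, hRic X (E j)]
  fin_cases j <;> simp [ricciDiag, br, E, ip, Fin.sum_univ_five, Pi.single_apply] <;> ring

lemma IsDerivation.diag_four_eq_left {D : V →ₗ[ℝ] V} (hD : IsDerivation (br s m) D)
    (hs : s ≠ 0) : D (E 4) 4 = D (E 0) 0 + D (E 1) 1 := by
  have h : s * D (E 4) 4 = s * (D (E 0) 0 + D (E 1) 1) := by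
    simpa [br, E, mul_add] using congrFun (hD (E 0) (E 1)) 4
  exact mul_left_cancel₀ hs h

lemma IsDerivation.diag_four_eq_right {D : V →ₗ[ℝ] V} (hD : IsDerivation (br s m) D)
    (hm : m ≠ 0) : D (E 4) 4 = D (E 2) 2 + D (E 3) 3 := by
  have h : m * D (E 4) 4 = m * (D (E 2) 2 + D (E 3) 3) := by
    simpa [br, E, mul_add] using congrFun (hD (E 2) (E 3)) 4
  exact mul_left_cancel₀ hm h

lemma isDerivation_toLin'_diagonal (d : Fin 5 → ℝ) (h₁ : d 4 = d 0 + d 1)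
    (h₂ : d 4 = d 2 + d 3) : IsDerivation (br s m) (Matrix.toLin' (Matrix.diagonal d)) := by
  intro X Y
  ext j
  simp only [br, E, Matrix.toLin'_apply, Matrix.mulVec_diagonal, Pi.add_apply, Pi.smul_apply,
    Pi.single_apply, smul_eq_mul]
  fin_cases j <;> simp
  linear_combination (s * (X 0 * Y 1 - X 1 * Y 0)) * h₁ + (m * (X 2 * Y 3 - X 3 * Y 2)) * h₂

lemma eq_of_isRicci_eq_smul_id_add_derivation (hm : 0 < m) (hsm : m ≤ s) {Ric D : V →ₗ[ℝ] V} {c : ℝ}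
    (hRic : IsRicci (br s m) Ric) (hD : IsDerivation (br s m) D)
    (hEq : Ric = c • LinearMap.id + D) : s = m ∧ c = -2 * m ^ 2 := by
  have hdiag (j : Fin 5) : D (E j) j = ricciDiag s m j - c := by
    have h := congrFun (LinearMap.congr_fun hEq (E j)) j
    simp only [LinearMap.add_apply, LinearMap.smul_apply, LinearMap.id_apply, Pi.add_apply,
      Pi.smul_apply, smul_eq_mul, hRic.apply_eq, E_apply_self] at h
    linarith
  have h₁ := hD.diag_four_eq_left (by linarith)
  have h₂ := hD.diag_four_eq_right hm.ne'
  simp only [hdiag, ricciDiag, Matrix.cons_val] at h₁ h₂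
  have hsq : (s - m) * (s + m) = 0 := by linear_combination h₁ - h₂
  have hs : s = m := by
    rcases mul_eq_zero.mp hsq with h | h <;> linarith
  subst hs
  exact ⟨rfl, by linarith⟩

theorem stmt0 (s m : ℝ) (hsm : s ≥ m) (hm : 0 < m)
    (Ric : V →ₗ[ℝ] V) (hRic : IsRicci (br s m) Ric) :
    ((∃ (c : ℝ) (D : V →ₗ[ℝ] V), IsDerivation (br s m) D ∧
        Ric = c • (LinearMap.id : V →ₗ[ℝ] V) + D) ↔ (s = m)) ∧
    (∀ (c : ℝ) (D : V →ₗ[ℝ] V), IsDerivation (br s m) D →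
        Ric = c • (LinearMap.id : V →ₗ[ℝ] V) + D → c = -2 * m ^ 2) := by
  have necessary := fun c D (hD : IsDerivation (br s m) D) hEq =>
    eq_of_isRicci_eq_smul_id_add_derivation (c := c) hm hsm hRic hD hEq
  refine ⟨⟨fun ⟨c, D, hD, hEq⟩ => (necessary c D hD hEq).1, ?_⟩,
    fun c D hD hEq => (necessary c D hD hEq).2⟩
  rintro rfl
  let d : Fin 5 → ℝ := ![3 / 2 * s ^ 2, 3 / 2 * s ^ 2, 3 / 2 * s ^ 2, 3 / 2 * s ^ 2, 3 * s ^ 2]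
  refine ⟨-2 * s ^ 2, Matrix.toLin' (Matrix.diagonal d),
    isDerivation_toLin'_diagonal d (by simp only [d, Matrix.cons_val]; ring)
    (by simp only [d, Matrix.cons_val]; ring), ?_⟩
  refine LinearMap.ext fun X => funext fun j => ?_
  rw [hRic.apply_eq]
  fin_cases j <;> simp [ricciDiag, d, Matrix.mulVec_diagonal] <;> ring

end

end Nilsoliton0
end

section
/- For real numbers m, v > 0 and s ≥ 0, the system of equations in the unknown c ∈ ℝ given by m·v·s = 0, c·m + (3/2)(m³ + s²m) = 0, c·s + (3/2)(s³ + m²s) + 2v²s = 0, c·v + (3/2)s²v + 2v³ = 0, and c·v + (1/2)s²v + 2v³ = 0 has a solution if and only if s = 0 and v = (√3/2)·m, in which case the unique solution is c = −(3/2)m². -/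
open scoped BigOperators

namespace Nilsoliton16

noncomputable section

abbrev V : Type := Fin 5 → ℝ

/-- The orthonormal basis vectors E₁,…,E₅ (indexed 0,…,4). -/
def E (i : Fin 5) : V := Pi.single i 1

/-- The inner product making `E` an orthonormal basis. -/
def ip (x y : V) : ℝ := ∑ i, x i * y i

/-- `D` is a derivation of the bracket `br`. -/
def IsDerivation (br : V → V → V) (D : V →ₗ[ℝ] V) : Prop :=
  ∀ X Y : V, D (br X Y) = br (D X) Y + br X (D Y)

/-- `Ric` is the Ricci operator of the nilpotent Lie group with left-invariant
metric determined by the bracket `br` and the orthonormal basis `E`. -/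
def IsRicci (br : V → V → V) (Ric : V →ₗ[ℝ] V) : Prop :=
  ∀ X Y : V, ip (Ric X) Y =
      -(1/2) * (∑ i : Fin 5, ip (br X (E i)) (br Y (E i)))
      + (1/4) * (∑ i : Fin 5, ∑ j : Fin 5, ip (br (E i) (E j)) X * ip (br (E i) (E j)) Y)

/-- The algebraic Ricci soliton equations for `l₅,₉` (case B) with soliton constant `c`. -/
def IsSolitonConstant (m v s c : ℝ) : Prop :=
  m * v * s = 0 ∧
  c * m + (3/2) * (m ^ 3 + s ^ 2 * m) = 0 ∧
  c * s + (3/2) * (s ^ 3 + m ^ 2 * s) + 2 * v ^ 2 * s = 0 ∧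
  c * v + (3/2) * s ^ 2 * v + 2 * v ^ 3 = 0 ∧
  c * v + (1/2) * s ^ 2 * v + 2 * v ^ 3 = 0

theorem isSolitonConstant_iff {m v s c : ℝ} (hm : m ≠ 0) (hv : v ≠ 0) :
    IsSolitonConstant m v s c ↔ s = 0 ∧ c = -(3/2) * m ^ 2 ∧ v ^ 2 = 3/4 * m ^ 2 := by
  constructor
  · rintro ⟨-, hcm, -, hcv, hcv'⟩
    have hs : s = 0 := by
      have : s ^ 2 * v = 0 := by linear_combination hcv - hcv'
      simpa [hv] using this
    subst hs
    have hc : c = -(3/2) * m ^ 2 := by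
      have : m * (c + (3/2) * m ^ 2) = 0 := by linear_combination hcm
      linear_combination (mul_eq_zero.1 this).resolve_left hm
    subst hc
    have : v * (2 * v ^ 2 - (3/2) * m ^ 2) = 0 := by linear_combination hcv
    exact ⟨rfl, rfl, by linear_combination (mul_eq_zero.1 this).resolve_left hv / 2⟩
  · rintro ⟨rfl, rfl, hv2⟩
    refine ⟨by ring, by ring, by ring, ?_, ?_⟩ <;> linear_combination 2 * v * hv2

theorem eq_sqrt_three_div_two_mul_iff {m v : ℝ} (hm : 0 ≤ m) (hv : 0 ≤ v) :
    v = Real.sqrt 3 / 2 * m ↔ v ^ 2 = 3/4 * m ^ 2 := by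
  have h3 : Real.sqrt 3 ^ 2 = 3 := Real.sq_sqrt (by norm_num)
  rw [← pow_left_inj₀ hv (by positivity) two_ne_zero, mul_pow, div_pow, h3]
  norm_num

theorem stmt16_general (m v s : ℝ) (hm : 0 < m) (hv : 0 < v) :
    ((∃ c : ℝ,
      m * v * s = 0 ∧
      c * m + (3/2) * (m ^ 3 + s ^ 2 * m) = 0 ∧
      c * s + (3/2) * (s ^ 3 + m ^ 2 * s) + 2 * v ^ 2 * s = 0 ∧
      c * v + (3/2) * s ^ 2 * v + 2 * v ^ 3 = 0 ∧
      c * v + (1/2) * s ^ 2 * v + 2 * v ^ 3 = 0) ↔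
      (s = 0 ∧ v = (Real.sqrt 3 / 2) * m)) ∧
    (∀ c : ℝ,
      (m * v * s = 0 ∧
      c * m + (3/2) * (m ^ 3 + s ^ 2 * m) = 0 ∧
      c * s + (3/2) * (s ^ 3 + m ^ 2 * s) + 2 * v ^ 2 * s = 0 ∧
      c * v + (3/2) * s ^ 2 * v + 2 * v ^ 3 = 0 ∧
      c * v + (1/2) * s ^ 2 * v + 2 * v ^ 3 = 0) →
      c = -(3/2) * m ^ 2) := by
  have key (c : ℝ) := isSolitonConstant_iff (s := s) (c := c) hm.ne' hv.ne'
  have hsqrt := eq_sqrt_three_div_two_mul_iff hm.le hv.le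
  refine ⟨⟨?_, ?_⟩, fun c hc => ((key c).1 hc).2.1⟩
  · rintro ⟨c, hc⟩
    obtain ⟨hs, -, hv2⟩ := (key c).1 hc
    exact ⟨hs, hsqrt.2 hv2⟩
  · rintro ⟨hs, hvm⟩
    exact ⟨_, (key _).2 ⟨hs, rfl, hsqrt.1 hvm⟩⟩

theorem stmt16 (m v s : ℝ) (hm : 0 < m) (hv : 0 < v) (hs : 0 ≤ s) :
    ((∃ c : ℝ,
      m * v * s = 0 ∧
      c * m + (3/2) * (m ^ 3 + s ^ 2 * m) = 0 ∧
      c * s + (3/2) * (s ^ 3 + m ^ 2 * s) + 2 * v ^ 2 * s = 0 ∧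
      c * v + (3/2) * s ^ 2 * v + 2 * v ^ 3 = 0 ∧
      c * v + (1/2) * s ^ 2 * v + 2 * v ^ 3 = 0) ↔
      (s = 0 ∧ v = (Real.sqrt 3 / 2) * m)) ∧
    (∀ c : ℝ,
      (m * v * s = 0 ∧
      c * m + (3/2) * (m ^ 3 + s ^ 2 * m) = 0 ∧
      c * s + (3/2) * (s ^ 3 + m ^ 2 * s) + 2 * v ^ 2 * s = 0 ∧
      c * v + (3/2) * s ^ 2 * v + 2 * v ^ 3 = 0 ∧
      c * v + (1/2) * s ^ 2 * v + 2 * v ^ 3 = 0) →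
      c = -(3/2) * m ^ 2) :=
  stmt16_general m v s hm hv

end

end Nilsoliton16
end
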